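/- arXiv:1204.4251 — 3 statements merged into one kernel-verified Lean document; each statement's English description precedes it below -/
import Mathlib

section
/- The vertex connectivity of the augmented cube AQ_3 equals 4. -/
/-- Flip the single bit at index `i` (paper bit `i+1`), i.e. the map `X ↦ X_{i+1}`. -/
def flipBit {n : ℕ} (i : Fin n) (X : Fin n → Bool) : Fin n → Bool :=
  fun j => if j = i then !(X j) else X j

/-- Flip all bits at indices `≤ i` (paper bits `i+1, i, …, 1`), i.e. the map `X ↦ X̄_{i+1}`. -/
def flipDown {n : ℕ} (i : Fin n) (X : Fin n → Bool) : Fin n → Bool :=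
  fun j => if j ≤ i then !(X j) else X j

lemma flipBit_flipBit {n : ℕ} (i : Fin n) (X : Fin n → Bool) :
    flipBit i (flipBit i X) = X := by
  funext j; by_cases h : j = i <;> simp [flipBit, h]

lemma flipDown_flipDown {n : ℕ} (i : Fin n) (X : Fin n → Bool) :
    flipDown i (flipDown i X) = X := by
  funext j; by_cases h : j ≤ i <;> simp [flipDown, h]

/-- The augmented cube `AQ_n`: vertices are `n`-bit strings; two distinct vertices `X, Y`
are adjacent iff `Y = X_i` for some `1 ≤ i ≤ n` (a hypercube edge) or `Y = X̄_i` for some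
`2 ≤ i ≤ n` (a complement edge).  Paper bit `i` corresponds to index `i - 1 : Fin n`. -/
def augCube (n : ℕ) : SimpleGraph (Fin n → Bool) where
  Adj X Y := X ≠ Y ∧
    ((∃ i : Fin n, Y = flipBit i X) ∨ (∃ i : Fin n, 1 ≤ i.val ∧ Y = flipDown i X))
  symm := by
    refine ⟨?_⟩
    rintro X Y ⟨hne, h⟩
    refine ⟨hne.symm, ?_⟩
    rcases h with ⟨i, rfl⟩ | ⟨i, hi, rfl⟩
    · exact Or.inl ⟨i, (flipBit_flipBit i X).symm⟩
    · exact Or.inr ⟨i, hi, (flipDown_flipDown i X).symm⟩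
  loopless := ⟨fun X h => h.1 rfl⟩

/-! `AQ_3` is 5-regular on 8 vertices, so two non-adjacent vertices have at least
`5 + 5 - 6 = 4` common neighbours: after deleting at most three vertices, any two remaining
vertices are still adjacent or joined through a surviving common neighbour. Conversely, deleting
the four even-weight vertices leaves only edges that preserve bit 3, so what remains is
disconnected. -/

namespace SimpleGraph

variable {V : Type*} {G : SimpleGraph V}

theorem Reachable.apply_eq_of_forall_adj {α : Type*} {f : V → α}
    (hf : ∀ x y, G.Adj x y → f x = f y) {u v : V} (h : G.Reachable u v) : f u = f v := by
  obtain ⟨p⟩ := h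
  induction p with
  | nil => rfl
  | cons hadj _ ih => exact (hf _ _ hadj).trans ih

theorem degree_add_degree_add_two_le [Fintype V] [DecidableRel G.Adj] {u v : V}
    (huv : u ≠ v) (hadj : ¬G.Adj u v) :
    G.degree u + G.degree v + 2 ≤ (G.commonNeighbors u v).ncard + Fintype.card V := by
  classical
  have hsub : G.neighborFinset u ∪ G.neighborFinset v ⊆ Finset.univ \ {u, v} := by
    intro w hw
    simp only [Finset.mem_union, mem_neighborFinset] at hw
    simp only [Finset.mem_sdiff, Finset.mem_univ, Finset.mem_insert, Finset.mem_singleton,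
      true_and, not_or]
    rcases hw with hw | hw
    · exact ⟨hw.ne', fun h => hadj (h ▸ hw)⟩
    · exact ⟨fun h => hadj (h ▸ hw.symm), hw.ne'⟩
  have hcommon :
      (G.commonNeighbors u v).ncard = (G.neighborFinset u ∩ G.neighborFinset v).card := by
    rw [commonNeighbors_eq, Set.ncard_eq_toFinset_card', Set.toFinset_inter]; rfl
  have hunion := Finset.card_union_add_card_inter (G.neighborFinset u) (G.neighborFinset v)
  have hcard := Finset.card_le_card hsub
  rw [Finset.card_univ_sdiff, Finset.card_pair huv] at hcard
  rw [card_neighborFinset_eq_degree, card_neighborFinset_eq_degree] at hunion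
  have : 2 ≤ Fintype.card V := by
    simpa [Finset.card_pair huv] using Finset.card_le_univ {u, v}
  omega

theorem induce_compl_preconnected_of_ncard_lt [Finite V] {k : ℕ}
    (hG : ∀ u v, u ≠ v → ¬G.Adj u v → k ≤ (G.commonNeighbors u v).ncard)
    {S : Set V} (hS : S.ncard < k) : (G.induce Sᶜ).Preconnected := by
  rintro ⟨x, hx⟩ ⟨y, hy⟩
  by_cases hxy : x = y
  · subst hxy; rfl
  by_cases hadj : G.Adj x y
  · exact Adj.reachable (induce_adj.2 hadj)
  obtain ⟨w, hw, hwS⟩ := Set.not_subset.1 fun h : G.commonNeighbors x y ⊆ S =>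
    (hG x y hxy hadj).not_gt (hS.trans_le' (Set.ncard_le_ncard h))
  rw [mem_commonNeighbors] at hw
  exact (Adj.reachable (G := G.induce Sᶜ) (u := ⟨x, hx⟩) (v := ⟨w, hwS⟩) hw.1).trans
    (Adj.reachable (induce_adj.2 hw.2.symm))

end SimpleGraph

instance (n : ℕ) : DecidableRel (augCube n).Adj := fun X Y =>
  inferInstanceAs (Decidable (X ≠ Y ∧
    ((∃ i : Fin n, Y = flipBit i X) ∨ (∃ i : Fin n, 1 ≤ i.val ∧ Y = flipDown i X))))

theorem augCube3_isRegularOfDegree : (augCube 3).IsRegularOfDegree 5 := by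
  unfold SimpleGraph.IsRegularOfDegree; decide

theorem augCube3_four_le_ncard_commonNeighbors (X Y : Fin 3 → Bool) (hXY : X ≠ Y)
    (hadj : ¬(augCube 3).Adj X Y) : 4 ≤ ((augCube 3).commonNeighbors X Y).ncard := by
  have h := (augCube 3).degree_add_degree_add_two_le hXY hadj
  rw [augCube3_isRegularOfDegree X, augCube3_isRegularOfDegree Y] at h
  have hcard : Fintype.card (Fin 3 → Bool) = 8 := rfl
  omega

-- Among odd-weight vertices the only edges are the complement edges `X ↦ X̄_2`, which fix bit 3.
def evenWeight : Finset (Fin 3 → Bool) := {X | (X 0 ^^ X 1 ^^ X 2) = false}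

theorem augCube3_apply_two_eq_of_adj (X Y : Fin 3 → Bool) (hX : X ∉ evenWeight)
    (hY : Y ∉ evenWeight) (h : (augCube 3).Adj X Y) : X 2 = Y 2 := by
  revert X Y; decide

/-- The vertex connectivity of `AQ_3` equals `4`. -/
theorem augCube3_connectivity :
    IsLeast {k : ℕ | ∃ S : Set (Fin 3 → Bool),
      S.ncard = k ∧ ¬ ((augCube 3).induce Sᶜ).Connected} 4 := by
  refine ⟨⟨evenWeight, by rw [Set.ncard_coe_finset]; rfl, fun h => ?_⟩, ?_⟩
  · have hreach := h.preconnected ⟨![true, false, false], by decide⟩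
      ⟨![false, false, true], by decide⟩
    exact Bool.false_ne_true <| hreach.apply_eq_of_forall_adj
      (f := fun X : ↥(↑evenWeight : Set (Fin 3 → Bool))ᶜ => X.1 2)
      fun X Y hXY => augCube3_apply_two_eq_of_adj X Y X.2 Y.2 hXY
  · rintro k ⟨S, rfl, hS⟩
    by_contra! hk
    have hne : Sᶜ.Nonempty := Set.nonempty_compl.2 fun h => by
      rw [h, Set.ncard_univ, Nat.card_eq_fintype_card] at hk
      exact absurd hk (by decide)
    have := hne.to_subtype
    exact hS ⟨SimpleGraph.induce_compl_preconnected_of_ncard_lt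
      augCube3_four_le_ncard_commonNeighbors hk⟩
end

section
/- Let n ≥ 3 and let X be a vertex of the augmented cube AQ_n. For 2 ≤ i ≤ n, the set of common neighbors of X and X̄_i in AQ_n equals {X_i, X_{i+1}, X̄_{i−1}, X̄_{i+1}} if 2 ≤ i ≤ n−1, and equals {X̄_{n−1}, X_n} if i = n. In particular, X and X̄_i have exactly four common neighbors when 2 ≤ i ≤ n−1 and exactly two common neighbors when i = n. -/
/-! Write a vertex as `flipSet s X`, i.e. `X` with the bits in `s` complemented. Then
`X ~ flipSet s X` in `AQ_n` exactly when `s` is a single bit `{i}` or an initial segment `Iic i`,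
so the common neighbours of `X` and `flipSet D X` are the `flipSet s X` for which both `s` and
`s ∆ D` have this shape. For `D = Iic m` with `m ≥ 1`, the bit `0` lies in `D`, so `s` and
`s ∆ D` are not both initial segments; comparing the remaining shapes at a few bits leaves
`s ∈ {{m}, Iic (m - 1), {m + 1}, Iic (m + 1)}`, the last two only if `m + 1 < n`. Distinct sets
give distinct vertices, which yields the counts. -/

open Finset SimpleGraph
open scoped symmDiff

variable {n : ℕ}

def flipSet (s : Finset (Fin n)) (X : Fin n → Bool) : Fin n → Bool :=
  fun j => xor (X j) (decide (j ∈ s))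

lemma flipBit_eq_flipSet (i : Fin n) (X : Fin n → Bool) : flipBit i X = flipSet {i} X := by
  funext j; by_cases h : j = i <;> simp [flipBit, flipSet, h]

lemma flipDown_eq_flipSet (i : Fin n) (X : Fin n → Bool) :
    flipDown i X = flipSet (Iic i) X := by
  funext j; by_cases h : j ≤ i <;> simp [flipDown, flipSet, h]

lemma flipSet_flipSet (s t : Finset (Fin n)) (X : Fin n → Bool) :
    flipSet s (flipSet t X) = flipSet (s ∆ t) X := by
  funext j; by_cases hs : j ∈ s <;> by_cases ht : j ∈ t <;> simp [flipSet, mem_symmDiff, hs, ht]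

lemma flipSet_injective (X : Fin n → Bool) : Function.Injective (flipSet · X) := by
  intro s t h
  ext j
  simpa [flipSet] using congrFun h j

lemma exists_flipSet_eq (X Z : Fin n → Bool) : ∃ s, Z = flipSet s X :=
  ⟨univ.filter fun j => Z j ≠ X j, by
    funext j
    simp only [flipSet, mem_filter, mem_univ, true_and]
    cases Z j <;> cases X j <;> rfl⟩

lemma flipSet_ne_self {s : Finset (Fin n)} (hs : s.Nonempty) (X : Fin n → Bool) :
    flipSet s X ≠ X := by
  obtain ⟨j, hj⟩ := hs
  intro h
  simpa [flipSet, hj] using congrFun h j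

lemma Iic_eq_singleton_of_val_eq_zero {i : Fin n} (hi : i.val = 0) : Iic i = {i} := by
  ext j; simp only [mem_Iic, mem_singleton]; omega

-- `Iic 0 = {0}`, so allowing `Iic 0` here matches the convention `X̄_1 = X_1`.
def augCubeMoves (n : ℕ) : Set (Finset (Fin n)) :=
  {s | (∃ i, s = {i}) ∨ ∃ i, s = Iic i}

lemma augCube_adj_flipSet_iff (X : Fin n → Bool) (s : Finset (Fin n)) :
    (augCube n).Adj X (flipSet s X) ↔ s ∈ augCubeMoves n := by
  simp only [augCube, augCubeMoves, Set.mem_ofPred_eq, flipBit_eq_flipSet, flipDown_eq_flipSet,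
    (flipSet_injective X).eq_iff]
  constructor
  · rintro ⟨-, ⟨i, rfl⟩ | ⟨i, -, rfl⟩⟩
    exacts [Or.inl ⟨i, rfl⟩, Or.inr ⟨i, rfl⟩]
  · rintro (⟨i, rfl⟩ | ⟨i, rfl⟩)
    · exact ⟨(flipSet_ne_self (singleton_nonempty i) X).symm, Or.inl ⟨i, rfl⟩⟩
    refine ⟨(flipSet_ne_self nonempty_Iic X).symm, ?_⟩
    by_cases hi : i.val = 0
    · exact Or.inl ⟨i, Iic_eq_singleton_of_val_eq_zero hi⟩
    · exact Or.inr ⟨i, by omega, rfl⟩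

lemma augCube_commonNeighbors_flipSet (X : Fin n → Bool) (D : Finset (Fin n)) :
    (augCube n).commonNeighbors X (flipSet D X) =
      (flipSet · X) '' {s | s ∈ augCubeMoves n ∧ s ∆ D ∈ augCubeMoves n} := by
  ext Z
  obtain ⟨s, rfl⟩ := exists_flipSet_eq X Z
  have hZ : flipSet s X = flipSet (s ∆ D) (flipSet D X) := by
    rw [flipSet_flipSet, symmDiff_symmDiff_cancel_right]
  rw [mem_commonNeighbors, (flipSet_injective X).mem_set_image, augCube_adj_flipSet_iff, hZ,
    augCube_adj_flipSet_iff]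
  rfl

lemma eq_of_mem_augCubeMoves_of_symmDiff_Iic {m' m : Fin n} (hm : m'.val + 1 = m.val)
    {s t : Finset (Fin n)} (hs : s ∈ augCubeMoves n) (ht : t ∈ augCubeMoves n)
    (hst : s ∆ t = Iic m) :
    s = {m} ∨ s = Iic m' ∨ ∃ k : Fin n, m.val + 1 = k.val ∧ (s = {k} ∨ s = Iic k) := by
  have key := fun j => congrArg (j ∈ ·) hst
  rcases hs with ⟨a, rfl⟩ | ⟨a, rfl⟩ <;> rcases ht with ⟨c, rfl⟩ | ⟨c, rfl⟩ <;>
    simp only [mem_symmDiff, mem_singleton, mem_Iic, eq_iff_iff, Fin.ext_iff, Fin.le_def,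
      Fin.forall_iff] at key
  · have := key 0 (by omega); have := key 1 (by omega); have := key m
    rcases (by omega : a = m ∨ a = m' ∧ m'.val = 0) with rfl | ⟨rfl, h0⟩
    · exact Or.inl rfl
    · exact Or.inr (Or.inl (Iic_eq_singleton_of_val_eq_zero h0).symm)
  · have := key a a.2; have := key c c.2; have := key m m.2; have := key m' m'.2
    have := key (c - 1) (by omega)
    rcases (by omega : a = m ∨ m.val + 1 = a.val) with rfl | ha
    · exact Or.inl rfl
    · exact Or.inr (Or.inr ⟨a, ha, Or.inl rfl⟩)
  · have := key a a.2; have := key c c.2; have := key m m.2; have := key m' m'.2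
    have := key (a - 1) (by omega)
    rcases (by omega : a = m' ∨ m.val + 1 = a.val) with rfl | ha
    · exact Or.inr (Or.inl rfl)
    · exact Or.inr (Or.inr ⟨a, ha, Or.inr rfl⟩)
  · -- the bit `0` lies in `Iic a`, `Iic c` and `Iic m`
    have := key 0 (by omega)
    omega

lemma Iic_symmDiff_Iic_of_val_succ {a b : Fin n} (h : a.val + 1 = b.val) :
    Iic a ∆ Iic b = {b} := by
  ext j; simp only [mem_symmDiff, mem_Iic, mem_singleton]; omega

lemma mem_augCubeMoves_and_symmDiff_Iic_iff {m' m : Fin n} (hm : m'.val + 1 = m.val)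
    (s : Finset (Fin n)) :
    s ∈ augCubeMoves n ∧ s ∆ Iic m ∈ augCubeMoves n ↔
      s = {m} ∨ s = Iic m' ∨ ∃ k : Fin n, m.val + 1 = k.val ∧ (s = {k} ∨ s = Iic k) := by
  constructor
  · rintro ⟨hs, ht⟩
    exact eq_of_mem_augCubeMoves_of_symmDiff_Iic hm hs ht (symmDiff_symmDiff_cancel_left _ _)
  have single (i : Fin n) : {i} ∈ augCubeMoves n := Or.inl ⟨i, rfl⟩
  have initial (i : Fin n) : Iic i ∈ augCubeMoves n := Or.inr ⟨i, rfl⟩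
  have hm'm := Iic_symmDiff_Iic_of_val_succ hm
  rintro (rfl | rfl | ⟨k, hk, rfl | rfl⟩)
  · refine ⟨single m, ?_⟩
    rw [← hm'm, symmDiff_symmDiff_cancel_right]
    exact initial m'
  · refine ⟨initial m', ?_⟩
    rw [hm'm]
    exact single m
  · refine ⟨single k, ?_⟩
    rw [← Iic_symmDiff_Iic_of_val_succ hk, symmDiff_symmDiff_self']
    exact initial k
  · refine ⟨initial k, ?_⟩
    rw [symmDiff_comm, Iic_symmDiff_Iic_of_val_succ hk]
    exact single k

lemma augCube_commonNeighbors_flipDown_eq_image {m' m k : Fin n} (h₁ : m'.val + 1 = m.val)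
    (h₂ : m.val + 1 = k.val) (X : Fin n → Bool) :
    (augCube n).commonNeighbors X (flipDown m X) =
      (flipSet · X) '' {{m}, {k}, Iic m', Iic k} := by
  rw [flipDown_eq_flipSet, augCube_commonNeighbors_flipSet]
  congr 1
  ext s
  rw [Set.mem_ofPred_eq, mem_augCubeMoves_and_symmDiff_Iic_iff h₁]
  have hk (k' : Fin n) : m.val + 1 = k'.val ↔ k' = k := by rw [Fin.ext_iff]; omega
  simp only [hk, exists_eq_left, Set.mem_insert_iff, Set.mem_singleton_iff]
  tauto

lemma augCube_commonNeighbors_flipDown_last_eq_image {m' m : Fin n} (h₁ : m'.val + 1 = m.val)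
    (h₂ : m.val + 1 = n) (X : Fin n → Bool) :
    (augCube n).commonNeighbors X (flipDown m X) = (flipSet · X) '' {Iic m', {m}} := by
  rw [flipDown_eq_flipSet, augCube_commonNeighbors_flipSet]
  congr 1
  ext s
  rw [Set.mem_ofPred_eq, mem_augCubeMoves_and_symmDiff_Iic_iff h₁]
  have hk (k : Fin n) : m.val + 1 ≠ k.val := by omega
  simp only [hk, false_and, exists_false, or_false, Set.mem_insert_iff, Set.mem_singleton_iff]
  tauto

lemma augCube_commonNeighbors_flipDown {m' m k : Fin n} (h₁ : m'.val + 1 = m.val)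
    (h₂ : m.val + 1 = k.val) (X : Fin n → Bool) :
    (augCube n).commonNeighbors X (flipDown m X) =
      {flipBit m X, flipBit k X, flipDown m' X, flipDown k X} := by
  rw [augCube_commonNeighbors_flipDown_eq_image h₁ h₂]
  simp [Set.image_insert_eq, flipBit_eq_flipSet, flipDown_eq_flipSet]

lemma ncard_augCube_commonNeighbors_flipDown {m' m k : Fin n} (h₁ : m'.val + 1 = m.val)
    (h₂ : m.val + 1 = k.val) (X : Fin n → Bool) :
    ((augCube n).commonNeighbors X (flipDown m X)).ncard = 4 := by
  rw [augCube_commonNeighbors_flipDown_eq_image h₁ h₂,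
    Set.ncard_image_of_injective _ (flipSet_injective X), Set.ncard_insert_of_notMem,
    Set.ncard_insert_of_notMem, Set.ncard_pair]
  all_goals simp only [Set.mem_insert_iff, Set.mem_singleton_iff, not_or, ne_eq]
  all_goals repeat' apply And.intro
  -- the pair `(m ∈ s, k ∈ s)` tells the four sets apart
  all_goals
    intro h
    have hm := congrArg (m ∈ ·) h
    have hk := congrArg (k ∈ ·) h
    simp only [mem_singleton, mem_Iic, Fin.ext_iff, Fin.le_def, eq_iff_iff, le_refl, true_iff,
      iff_true] at hm hk
    omega

lemma augCube_commonNeighbors_flipDown_last {m' m : Fin n} (h₁ : m'.val + 1 = m.val)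
    (h₂ : m.val + 1 = n) (X : Fin n → Bool) :
    (augCube n).commonNeighbors X (flipDown m X) = {flipDown m' X, flipBit m X} := by
  rw [augCube_commonNeighbors_flipDown_last_eq_image h₁ h₂]
  simp [Set.image_insert_eq, flipBit_eq_flipSet, flipDown_eq_flipSet]

lemma ncard_augCube_commonNeighbors_flipDown_last {m' m : Fin n} (h₁ : m'.val + 1 = m.val)
    (h₂ : m.val + 1 = n) (X : Fin n → Bool) :
    ((augCube n).commonNeighbors X (flipDown m X)).ncard = 2 := by
  rw [augCube_commonNeighbors_flipDown_last_eq_image h₁ h₂,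
    Set.ncard_image_of_injective _ (flipSet_injective X), Set.ncard_pair]
  intro h
  have hm := congrArg (m ∈ ·) h
  simp only [mem_singleton, mem_Iic, Fin.le_def, eq_iff_iff, iff_true] at hm
  omega

/-- Let `n ≥ 3`, `X` a vertex of `AQ_n` and `2 ≤ i ≤ n` (paper bit `i` is index `i - 1`).
The common neighbors of `X` and `X̄_i` are `{X_i, X_(i+1), X̄_(i-1), X̄_(i+1)}` (four
vertices) if `2 ≤ i ≤ n - 1`, and `{X̄_(n-1), X_n}` (two vertices) if `i = n`. -/
theorem augCube_common_neighbors_complement_edge (n : ℕ) (X : Fin n → Bool)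
    (i : ℕ) (h1 : 2 ≤ i) (h2 : i ≤ n) :
    (∀ hin : i ≤ n - 1,
      {Z | (augCube n).Adj X Z ∧ (augCube n).Adj (flipDown ⟨i - 1, by omega⟩ X) Z} =
        {flipBit ⟨i - 1, by omega⟩ X, flipBit ⟨i, by omega⟩ X,
          flipDown ⟨i - 2, by omega⟩ X, flipDown ⟨i, by omega⟩ X} ∧
      {Z | (augCube n).Adj X Z ∧ (augCube n).Adj (flipDown ⟨i - 1, by omega⟩ X) Z}.ncard = 4) ∧
    (i = n →
      {Z | (augCube n).Adj X Z ∧ (augCube n).Adj (flipDown ⟨i - 1, by omega⟩ X) Z} =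
        {flipDown ⟨n - 2, by omega⟩ X, flipBit ⟨n - 1, by omega⟩ X} ∧
      {Z | (augCube n).Adj X Z ∧ (augCube n).Adj (flipDown ⟨i - 1, by omega⟩ X) Z}.ncard = 2) := by
  have h₁ : i - 2 + 1 = i - 1 := by omega
  have h₂ : i - 1 + 1 = i := by omega
  refine ⟨fun _ => ⟨augCube_commonNeighbors_flipDown h₁ h₂ X,
    ncard_augCube_commonNeighbors_flipDown (m' := ⟨i - 2, by omega⟩) (k := ⟨i, by omega⟩)
      h₁ h₂ X⟩, fun hi => ?_⟩
  subst hi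
  exact ⟨augCube_commonNeighbors_flipDown_last h₁ h₂ X,
    ncard_augCube_commonNeighbors_flipDown_last (m' := ⟨i - 2, by omega⟩) h₁ h₂ X⟩
end

section
/- Let n ≥ 5, let X be a vertex of the augmented cube AQ_n, and let i, j be integers with 1 ≤ i < j ≤ n, so that P = (X_i, X, X_j) is a path of length two in AQ_n. Then |N_{AQ_n}(P)| = 6n − 13 if (i = 1 and j ∈ {2, 3}) or (i > 1 and j = i + 1), and |N_{AQ_n}(P)| = 6n − 12 otherwise. -/
/-!
`AQ_n` is the Cayley graph of `(ℤ/2)ⁿ`, with symmetric difference as group law, for the set `G`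
of the `2n - 1` masks `e_k` and `d_k = e_0 ∆ ⋯ ∆ e_k` (`k ≥ 1`). Translating by `X`, the
neighbourhood of `P = (X ∆ e_a, X, X ∆ e_b)` becomes `(G ∪ (e_a ∆ G) ∪ (e_b ∆ G)) \ {0, e_a, e_b}`,
and inclusion–exclusion reduces its size to common-neighbour counts: `X` and `X ∆ e_c` have two
common neighbours, `X ∆ e_a` and `X ∆ e_b` have four in the exceptional cases and two otherwise,
and all three vertices have one common neighbour in the exceptional cases and none otherwise.
-/

open scoped symmDiff

theorem Set.ncard_union_union_add_ncard_inter {α : Type*} {s t u : Set α} (hs : s.Finite)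
    (ht : t.Finite) (hu : u.Finite) :
    (s ∪ t ∪ u).ncard + (s ∩ t).ncard + (s ∩ u).ncard + (t ∩ u).ncard =
      s.ncard + t.ncard + u.ncard + (s ∩ t ∩ u).ncard := by
  have hstu := Set.ncard_union_add_ncard_inter (s ∪ t) u (hs.union ht) hu
  have hst := Set.ncard_union_add_ncard_inter s t hs ht
  have hsu_tu := Set.ncard_union_add_ncard_inter (s ∩ u) (t ∩ u) (hs.inter_of_left u)
    (ht.inter_of_left u)
  rw [Set.union_inter_distrib_right] at hstu
  rw [Set.inter_inter_inter_comm, Set.inter_self] at hsu_tu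
  omega

section symmDiff

variable {α : Type*} [GeneralizedBooleanAlgebra α]

theorem Set.ncard_preimage_symmDiff (c : α) (s : Set α) : ((c ∆ ·) ⁻¹' s).ncard = s.ncard :=
  Set.ncard_preimage_of_injective_subset_range (symmDiff_right_injective c)
    (by simp [(symmDiff_right_involutive c).surjective.range_eq])

theorem ncard_pair_symmDiff {c : α} (hc : c ≠ ⊥) (x : α) : ({x, c ∆ x} : Set α).ncard = 2 :=
  Set.ncard_pair fun h => hc (symmDiff_eq_right.1 h.symm)

theorem ncard_two_pairs_symmDiff {c x y : α} (hc : c ≠ ⊥) (hxy : x ≠ y) (hxy' : x ≠ c ∆ y) :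
    ({x, c ∆ x, y, c ∆ y} : Set α).ncard = 4 := by
  have hx : x ≠ c ∆ x := fun h => hc (symmDiff_eq_right.1 h.symm)
  have hcx : c ∆ x ≠ y := fun h => hxy' (by rw [← h, symmDiff_symmDiff_cancel_left])
  have hcxy : c ∆ x ≠ c ∆ y := fun h => hxy (symmDiff_right_injective c h)
  rw [Set.ncard_insert_of_notMem (by simp [hx, hxy, hxy']),
    Set.ncard_insert_of_notMem (by simp [hcx, hcxy]), ncard_pair_symmDiff hc]

end symmDiff

namespace AugmentedCube

variable {n : ℕ}

/-- Indexed by `ℕ` (0-based, like `Fin n`) to keep index arithmetic out of `Fin`; an index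
`k ≥ n` gives a junk mask. -/
def unitMask (k : ℕ) : Fin n → Bool := fun j => decide (j.val = k)

def prefixMask (k : ℕ) : Fin n → Bool := fun j => decide (j.val ≤ k)

def generators (n : ℕ) : Set (Fin n → Bool) :=
  unitMask '' Set.Iio n ∪ prefixMask '' Set.Ico 1 n

theorem mask_eq_iff {m m' : Fin n → Bool} :
    m = m' ↔ ∀ j (hj : j < n), (m ⟨j, hj⟩ = true ↔ m' ⟨j, hj⟩ = true) := by
  rw [funext_iff, Fin.forall_iff]
  exact forall_congr' fun j => forall_congr' fun hj => Bool.eq_iff_iff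

theorem symmDiff_apply_eq_true (m m' : Fin n → Bool) (j : Fin n) :
    (m ∆ m') j = true ↔ ¬(m j = true ↔ m' j = true) := by
  rw [Pi.symmDiff_apply, Bool.symmDiff_eq_xor]
  cases m j <;> cases m' j <;> decide

theorem unitMask_apply_eq_true (k : ℕ) (j : Fin n) : unitMask k j = true ↔ j.val = k :=
  decide_eq_true_iff

theorem prefixMask_apply_eq_true (k : ℕ) (j : Fin n) : prefixMask k j = true ↔ j.val ≤ k :=
  decide_eq_true_iff

theorem unitMask_mem_generators {k : ℕ} (hk : k < n) : unitMask k ∈ generators n :=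
  Or.inl ⟨k, hk, rfl⟩

theorem prefixMask_mem_generators {k : ℕ} (hk1 : 1 ≤ k) (hk : k < n) :
    prefixMask k ∈ generators n :=
  Or.inr ⟨k, ⟨hk1, hk⟩, rfl⟩

theorem unitMask_ne_bot {k : ℕ} (hk : k < n) : (unitMask k : Fin n → Bool) ≠ ⊥ := by
  intro h
  simpa [unitMask] using congrFun h ⟨k, hk⟩

theorem bot_notMem_generators : ⊥ ∉ generators n := by
  rintro (⟨k, hk, h⟩ | ⟨k, ⟨-, hk⟩, h⟩)
  · exact unitMask_ne_bot hk h
  · simpa [prefixMask] using congrFun h ⟨0, by omega⟩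

theorem unitMask_injOn : Set.InjOn (unitMask : ℕ → Fin n → Bool) (Set.Iio n) := by
  intro k hk l hl h
  simpa [unitMask] using congrFun h ⟨k, hk⟩

theorem prefixMask_injOn : Set.InjOn (prefixMask : ℕ → Fin n → Bool) (Set.Iio n) := by
  intro k (hk : k < n) l (hl : l < n) h
  have hkl := congrFun h ⟨k, hk⟩
  have hlk := congrFun h ⟨l, hl⟩
  simp only [prefixMask, decide_eq_decide, le_refl, true_iff, iff_true] at hkl hlk
  omega

theorem unitMask_ne_prefixMask {k l : ℕ} (hl1 : 1 ≤ l) (hl : l < n) :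
    (unitMask k : Fin n → Bool) ≠ prefixMask l := by
  intro h
  have h0 := congrFun h ⟨0, by omega⟩
  have hl' := congrFun h ⟨l, hl⟩
  simp only [unitMask, prefixMask, decide_eq_decide, Nat.zero_le, le_refl, iff_true] at h0 hl'
  omega

theorem ncard_generators : (generators n).ncard = 2 * n - 1 := by
  have hdisj : Disjoint (unitMask '' Set.Iio n) (prefixMask '' Set.Ico 1 n : Set (Fin n → Bool)) :=
    Set.disjoint_left.2 fun _ ⟨_, _, hk⟩ ⟨_, ⟨hl1, hl⟩, h⟩ =>
      unitMask_ne_prefixMask hl1 hl (hk.trans h.symm)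
  rw [generators, Set.ncard_union_eq hdisj, unitMask_injOn.ncard_image,
    (prefixMask_injOn.mono Set.Ico_subset_Iio_self).ncard_image, Set.ncard_Iio_nat,
    Set.ncard_Ico_nat]
  omega

theorem flipBit_eq_symmDiff (i : Fin n) (X : Fin n → Bool) : flipBit i X = X ∆ unitMask i := by
  funext j
  by_cases h : j = i <;>
    simp [flipBit, unitMask, Pi.symmDiff_apply, Bool.symmDiff_eq_xor, h, Fin.val_ne_of_ne]

theorem flipDown_eq_symmDiff (i : Fin n) (X : Fin n → Bool) :
    flipDown i X = X ∆ prefixMask i := by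
  funext j
  by_cases h : j ≤ i <;> simp [flipDown, prefixMask, Pi.symmDiff_apply, Bool.symmDiff_eq_xor, h]

theorem eq_symmDiff_iff {X Y m : Fin n → Bool} : Y = X ∆ m ↔ X ∆ Y = m := by
  constructor <;> rintro rfl
  · exact symmDiff_symmDiff_cancel_left X m
  · exact (symmDiff_symmDiff_cancel_left X Y).symm

theorem augCube_adj_iff (X Y : Fin n → Bool) : (augCube n).Adj X Y ↔ X ∆ Y ∈ generators n := by
  simp only [augCube, flipBit_eq_symmDiff, flipDown_eq_symmDiff, eq_symmDiff_iff]
  constructor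
  · rintro ⟨-, ⟨i, hi⟩ | ⟨i, hi1, hi⟩⟩
    · exact Or.inl ⟨i, i.isLt, hi.symm⟩
    · exact Or.inr ⟨i, ⟨hi1, i.isLt⟩, hi.symm⟩
  · intro h
    refine ⟨fun hXY => bot_notMem_generators (by rwa [hXY, symmDiff_self] at h), ?_⟩
    rcases h with ⟨k, hk, h⟩ | ⟨k, ⟨hk1, hk⟩, h⟩
    · exact Or.inl ⟨⟨k, hk⟩, h.symm⟩
    · exact Or.inr ⟨⟨k, hk⟩, hk1, h.symm⟩

theorem augCube_adj_symmDiff_iff (X c W : Fin n → Bool) :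
    (augCube n).Adj (X ∆ c) W ↔ c ∆ (X ∆ W) ∈ generators n := by
  rw [augCube_adj_iff, symmDiff_comm X c, symmDiff_assoc]

/-- `X ∆ m` is a common neighbour of `X` and `X ∆ c` exactly when `m ∈ commonMasks c`. -/
def commonMasks (c : Fin n → Bool) : Set (Fin n → Bool) :=
  generators n ∩ (c ∆ ·) ⁻¹' generators n

/- Here and in the other `indices_of_*` lemmas, evaluating the mask equation at the few indices
where one of its sides can change value pins the parameters down. -/
theorem indices_of_unitMask_symmDiff_unitMask_mem {c k : ℕ} (hc : c < n) (hk : k < n)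
    (h : unitMask c ∆ unitMask k ∈ generators n) : c ≤ 1 ∧ k = 1 - c := by
  rcases h with ⟨l, hl, h⟩ | ⟨l, ⟨hl1, hl⟩, h⟩ <;> rw [mask_eq_iff] at h <;>
    simp only [symmDiff_apply_eq_true, unitMask_apply_eq_true, prefixMask_apply_eq_true] at h
  · have hc' := h c hc; have hk' := h k hk; have hl' := h l hl
    omega
  · have h0 := h 0 (by omega); have h1 := h 1 (by omega); have hc' := h c hc
    have hk' := h k hk
    omega

theorem indices_of_unitMask_symmDiff_prefixMask_mem {c k : ℕ} (hc : c < n) (hk1 : 1 ≤ k)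
    (hk : k < n) (h : unitMask c ∆ prefixMask k ∈ generators n) :
    k = max 1 c ∨ (2 ≤ c ∧ k = c - 1) := by
  rcases h with ⟨l, hl, h⟩ | ⟨l, ⟨hl1, hl⟩, h⟩ <;> rw [mask_eq_iff] at h <;>
    simp only [symmDiff_apply_eq_true, unitMask_apply_eq_true, prefixMask_apply_eq_true] at h
  · have h0 := h 0 (by omega); have h1 := h 1 (by omega); have hc' := h c hc
    have hk' := h k hk; have hl' := h l hl
    omega
  · have h0 := h 0 (by omega); have hc' := h c hc; have hk' := h k hk; have hl' := h l hl
    have hk'' := h (min (k + 1) (n - 1)) (by omega)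
    have hl'' := h (min (l + 1) (n - 1)) (by omega)
    omega

theorem unitMask_symmDiff_prefixMask_mem_generators {c : ℕ} (hn : 2 ≤ n) (hc : c < n) :
    unitMask c ∆ prefixMask (max 1 c) ∈ generators n := by
  rcases Nat.lt_or_ge c 2 with hc2 | hc2
  · convert unitMask_mem_generators (show 1 - c < n by omega) using 1
    simp only [mask_eq_iff, symmDiff_apply_eq_true, unitMask_apply_eq_true,
      prefixMask_apply_eq_true]
    omega
  · convert prefixMask_mem_generators (show 1 ≤ c - 1 by omega) (show c - 1 < n by omega) using 1
    simp only [mask_eq_iff, symmDiff_apply_eq_true, unitMask_apply_eq_true,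
      prefixMask_apply_eq_true]
    omega

theorem commonMasks_unitMask {c : ℕ} (hn : 2 ≤ n) (hc : c < n) :
    commonMasks (unitMask c : Fin n → Bool) =
      {prefixMask (max 1 c), unitMask c ∆ prefixMask (max 1 c)} := by
  have hpartner := unitMask_symmDiff_prefixMask_mem_generators hn hc
  ext m
  simp only [Set.mem_insert_iff, Set.mem_singleton_iff]
  constructor
  · rintro ⟨⟨k, hk, rfl⟩ | ⟨k, ⟨hk1, hk⟩, rfl⟩, hcm⟩
    · obtain ⟨hc1, rfl⟩ := indices_of_unitMask_symmDiff_unitMask_mem hc hk hcm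
      right
      simp only [mask_eq_iff, symmDiff_apply_eq_true, unitMask_apply_eq_true,
        prefixMask_apply_eq_true]
      omega
    · rcases indices_of_unitMask_symmDiff_prefixMask_mem hc hk1 hk hcm with rfl | ⟨hc2, rfl⟩
      · exact Or.inl rfl
      · right
        simp only [mask_eq_iff, symmDiff_apply_eq_true, unitMask_apply_eq_true,
          prefixMask_apply_eq_true]
        omega
  · rintro (rfl | rfl)
    · exact ⟨prefixMask_mem_generators (le_max_left 1 c) (by omega), hpartner⟩
    · exact ⟨hpartner, by simpa [symmDiff_symmDiff_cancel_left] using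
        prefixMask_mem_generators (le_max_left 1 c) (by omega)⟩

/-- The condition of the theorem for the 0-based indices `a = i - 1`, `b = j - 1`. -/
def IsExceptionalPair (a b : ℕ) : Prop := b = a + 1 ∨ (a = 0 ∧ b = 2)

instance (a b : ℕ) : Decidable (IsExceptionalPair a b) :=
  inferInstanceAs (Decidable (_ ∨ _))

theorem indices_of_unitMask_symmDiff_unitMask_symmDiff_unitMask_mem {a b k : ℕ} (hab : a < b)
    (hb : b < n) (hk : k < n) (h : unitMask a ∆ unitMask b ∆ unitMask k ∈ generators n) :
    k = a ∨ k = b ∨ (b ≤ 2 ∧ k = 3 - a - b) := by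
  rcases h with ⟨l, hl, h⟩ | ⟨l, ⟨hl1, hl⟩, h⟩ <;> rw [mask_eq_iff] at h <;>
    simp only [symmDiff_apply_eq_true, unitMask_apply_eq_true, prefixMask_apply_eq_true] at h
  · have ha' := h a (by omega); have hb' := h b hb; have hk' := h k hk; have hl' := h l hl
    omega
  · have h0 := h 0 (by omega); have h1 := h 1 (by omega); have h2 := h (min 2 l) (by omega)
    have ha' := h a (by omega); have hb' := h b hb; have hk' := h k hk; have hl' := h l hl
    omega

theorem indices_of_unitMask_symmDiff_unitMask_symmDiff_prefixMask_mem {a b k : ℕ} (hab : a < b)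
    (hb : b < n) (hk1 : 1 ≤ k) (hk : k < n)
    (h : unitMask a ∆ unitMask b ∆ prefixMask k ∈ generators n) :
    (b ≤ 2 ∧ k = 2) ∨ (b = a + 1 ∧ 2 ≤ a ∧ (k = b ∨ k = a - 1)) := by
  rcases h with ⟨l, hl, h⟩ | ⟨l, ⟨hl1, hl⟩, h⟩ <;> rw [mask_eq_iff] at h <;>
    simp only [symmDiff_apply_eq_true, unitMask_apply_eq_true, prefixMask_apply_eq_true] at h
  · have h0 := h 0 (by omega); have h1 := h 1 (by omega); have h2 := h (min 2 k) (by omega)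
    have ha' := h a (by omega); have hb' := h b hb; have hk' := h k hk; have hl' := h l hl
    have hk'' := h (min (k + 1) (n - 1)) (by omega)
    omega
  · have h0 := h 0 (by omega); have ha' := h a (by omega); have ha'' := h (a + 1) (by omega)
    have hb' := h b hb; have hk' := h k hk; have hl' := h l hl
    have hk'' := h (min (k + 1) (n - 1)) (by omega)
    have hl'' := h (min (l + 1) (n - 1)) (by omega)
    omega

theorem unitMask_symmDiff_unitMask_symmDiff_prefixMask_mem_generators {a b : ℕ} (hab : a < b)
    (hb : b < n) (hn : 3 ≤ n) (hexc : IsExceptionalPair a b) :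
    unitMask a ∆ unitMask b ∆ prefixMask (max 2 b) ∈ generators n := by
  unfold IsExceptionalPair at hexc
  rcases Nat.lt_or_ge b 3 with hb2 | hb2
  · convert unitMask_mem_generators (show 3 - a - b < n by omega) using 1
    simp only [mask_eq_iff, symmDiff_apply_eq_true, unitMask_apply_eq_true,
      prefixMask_apply_eq_true]
    omega
  · convert prefixMask_mem_generators (show 1 ≤ a - 1 by omega) (show a - 1 < n by omega) using 1
    simp only [mask_eq_iff, symmDiff_apply_eq_true, unitMask_apply_eq_true,
      prefixMask_apply_eq_true]
    omega

theorem mem_commonMasks_unitMask_symmDiff_unitMask_iff {a b : ℕ} (hab : a < b) (hb : b < n)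
    (hn : 3 ≤ n) {m : Fin n → Bool} :
    m ∈ commonMasks (unitMask a ∆ unitMask b) ↔
      m = unitMask a ∨ m = unitMask b ∨ (IsExceptionalPair a b ∧
        (m = prefixMask (max 2 b) ∨ m = unitMask a ∆ unitMask b ∆ prefixMask (max 2 b))) := by
  constructor
  · rintro ⟨⟨k, hk, rfl⟩ | ⟨k, ⟨hk1, hk⟩, rfl⟩, hcm⟩
    · rcases indices_of_unitMask_symmDiff_unitMask_symmDiff_unitMask_mem hab hb hk hcm
        with rfl | rfl | ⟨hb2, rfl⟩
      · exact Or.inl rfl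
      · exact Or.inr (Or.inl rfl)
      · refine Or.inr (Or.inr ⟨by unfold IsExceptionalPair; omega, Or.inr ?_⟩)
        simp only [mask_eq_iff, symmDiff_apply_eq_true, unitMask_apply_eq_true,
          prefixMask_apply_eq_true]
        omega
    · rcases indices_of_unitMask_symmDiff_unitMask_symmDiff_prefixMask_mem hab hb hk1 hk hcm
        with ⟨hb2, rfl⟩ | ⟨rfl, ha2, rfl | rfl⟩
      · exact Or.inr (Or.inr ⟨by unfold IsExceptionalPair; omega, Or.inl (by rw [max_eq_left hb2])⟩)
      · exact Or.inr (Or.inr ⟨Or.inl rfl, Or.inl (by rw [max_eq_right (by omega)])⟩)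
      · refine Or.inr (Or.inr ⟨Or.inl rfl, Or.inr ?_⟩)
        simp only [mask_eq_iff, symmDiff_apply_eq_true, unitMask_apply_eq_true,
          prefixMask_apply_eq_true]
        omega
  · rintro (rfl | rfl | ⟨hexc, rfl | rfl⟩)
    · exact ⟨unitMask_mem_generators (by omega), by
        simpa [symmDiff_symmDiff_self'] using unitMask_mem_generators hb⟩
    · exact ⟨unitMask_mem_generators hb, by
        simpa [symmDiff_symmDiff_cancel_right] using unitMask_mem_generators (show a < n by omega)⟩
    · exact ⟨prefixMask_mem_generators (by omega) (by omega),
        unitMask_symmDiff_unitMask_symmDiff_prefixMask_mem_generators hab hb hn hexc⟩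
    · exact ⟨unitMask_symmDiff_unitMask_symmDiff_prefixMask_mem_generators hab hb hn hexc, by
        simpa [symmDiff_symmDiff_cancel_left] using prefixMask_mem_generators (k := max 2 b)
          (by omega) (by omega)⟩

theorem mem_commonMasks_inter_commonMasks_iff {a b : ℕ} (hab : a < b) (hb : b < n)
    {m : Fin n → Bool} :
    m ∈ commonMasks (unitMask a) ∩ commonMasks (unitMask b) ↔
      IsExceptionalPair a b ∧ m = prefixMask (max 1 a) := by
  rw [Set.mem_inter_iff, commonMasks_unitMask (by omega) (by omega),
    commonMasks_unitMask (by omega) hb]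
  simp only [Set.mem_insert_iff, Set.mem_singleton_iff]
  unfold IsExceptionalPair
  constructor
  · rintro ⟨rfl | rfl, h | h⟩ <;> rw [mask_eq_iff] at h <;>
      simp only [symmDiff_apply_eq_true, unitMask_apply_eq_true, prefixMask_apply_eq_true] at h
    · have ha' := h (max 1 a) (by omega); have hb' := h b hb
      exact ⟨by omega, rfl⟩
    · have ha' := h (max 1 a) (by omega); have hb' := h b hb; have hb'' := h (b - 1) (by omega)
      exact ⟨by omega, rfl⟩
    · have h0 := h 0 (by omega); have ha' := h a (by omega); have hb' := h b hb
      omega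
    · have h0 := h 0 (by omega); have ha' := h a (by omega); have hb' := h b hb
      omega
  · rintro ⟨hexc, rfl⟩
    refine ⟨Or.inl rfl, ?_⟩
    simp only [mask_eq_iff, symmDiff_apply_eq_true, unitMask_apply_eq_true,
      prefixMask_apply_eq_true]
    by_cases h01 : a = 0 ∧ b = 1
    · left; intro j hj; omega
    · right; intro j hj; omega

theorem ncard_commonMasks_unitMask {c : ℕ} (hn : 2 ≤ n) (hc : c < n) :
    (commonMasks (unitMask c : Fin n → Bool)).ncard = 2 := by
  rw [commonMasks_unitMask hn hc]
  exact ncard_pair_symmDiff (unitMask_ne_bot hc) _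

theorem ncard_commonMasks_unitMask_symmDiff_unitMask {a b : ℕ} (hab : a < b) (hb : b < n)
    (hn : 3 ≤ n) :
    (commonMasks (unitMask a ∆ unitMask b : Fin n → Bool)).ncard =
      if IsExceptionalPair a b then 4 else 2 := by
  have hc : (unitMask a ∆ unitMask b : Fin n → Bool) ≠ ⊥ := by
    rw [Ne, symmDiff_eq_bot]
    exact fun h => hab.ne (unitMask_injOn (show a < n by omega) hb h)
  split_ifs with hexc
  · have hb' : (unitMask b : Fin n → Bool) ≠ prefixMask (max 2 b) :=
      unitMask_ne_prefixMask (by omega) (by omega)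
    convert ncard_two_pairs_symmDiff hc (x := unitMask a) (y := prefixMask (max 2 b))
      (unitMask_ne_prefixMask (by omega) (by omega)) ?_ using 2
    · ext m
      simp [mem_commonMasks_unitMask_symmDiff_unitMask_iff hab hb hn, hexc,
        symmDiff_symmDiff_self']
    · intro h
      apply hb'
      simpa only [symmDiff_symmDiff_self', symmDiff_symmDiff_cancel_left] using
        congrArg (unitMask a ∆ unitMask b ∆ ·) h
  · convert ncard_pair_symmDiff hc (unitMask a) using 2
    ext m
    simp [mem_commonMasks_unitMask_symmDiff_unitMask_iff hab hb hn, hexc, symmDiff_symmDiff_self']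

theorem ncard_commonMasks_inter_commonMasks {a b : ℕ} (hab : a < b) (hb : b < n) :
    (commonMasks (unitMask a) ∩ commonMasks (unitMask b : Fin n → Bool)).ncard =
      if IsExceptionalPair a b then 1 else 0 := by
  split_ifs with hexc
  · rw [Set.ncard_eq_one]
    exact ⟨prefixMask (max 1 a), by
      ext m; simp [mem_commonMasks_inter_commonMasks_iff hab hb, hexc]⟩
  · rw [Set.ncard_eq_zero]
    ext m
    simp [mem_commonMasks_inter_commonMasks_iff hab hb, hexc]

def pathNeighborMasks (n a b : ℕ) : Set (Fin n → Bool) :=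
  (generators n ∪ (unitMask a ∆ ·) ⁻¹' generators n ∪ (unitMask b ∆ ·) ⁻¹' generators n) \
    {⊥, unitMask a, unitMask b}

theorem ncard_pathNeighborMasks {a b : ℕ} (hab : a < b) (hb : b < n) (hn : 3 ≤ n) :
    (pathNeighborMasks n a b).ncard = if IsExceptionalPair a b then 6 * n - 13 else 6 * n - 12 := by
  have hinter : (unitMask a ∆ ·) ⁻¹' generators n ∩ (unitMask b ∆ ·) ⁻¹' generators n =
      (unitMask a ∆ ·) ⁻¹' commonMasks (unitMask a ∆ unitMask b) := by
    ext m
    simp only [commonMasks, Set.mem_inter_iff, Set.mem_preimage,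
      symmDiff_symmDiff_symmDiff_comm, symmDiff_self, bot_symmDiff]
  have htriple : generators n ∩ (unitMask a ∆ ·) ⁻¹' generators n ∩
      (unitMask b ∆ ·) ⁻¹' generators n = commonMasks (unitMask a) ∩ commonMasks (unitMask b) := by
    ext m
    simp only [commonMasks, Set.mem_inter_iff, Set.mem_preimage]
    tauto
  have hsub : {⊥, unitMask a, unitMask b} ⊆
      generators n ∪ (unitMask a ∆ ·) ⁻¹' generators n ∪ (unitMask b ∆ ·) ⁻¹' generators n := by
    rintro m (rfl | rfl | rfl)
    · exact Or.inl (Or.inr (by simpa using unitMask_mem_generators (show a < n by omega)))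
    · exact Or.inl (Or.inl (unitMask_mem_generators (by omega)))
    · exact Or.inl (Or.inl (unitMask_mem_generators hb))
  have hpath : ({⊥, unitMask a, unitMask b} : Set (Fin n → Bool)).ncard = 3 := by
    rw [Set.ncard_insert_of_notMem, Set.ncard_pair]
    · exact fun h => hab.ne (unitMask_injOn (show a < n by omega) hb h)
    · simp [(unitMask_ne_bot (show a < n by omega)).symm, (unitMask_ne_bot hb).symm]
  have hcount := Set.ncard_union_union_add_ncard_inter (Set.toFinite (generators n))
    (Set.toFinite ((unitMask a ∆ ·) ⁻¹' generators n))
    (Set.toFinite ((unitMask b ∆ ·) ⁻¹' generators n))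
  rw [hinter, htriple, ← commonMasks, ← commonMasks, Set.ncard_preimage_symmDiff,
    Set.ncard_preimage_symmDiff, Set.ncard_preimage_symmDiff, ncard_generators,
    ncard_commonMasks_unitMask (by omega) (by omega), ncard_commonMasks_unitMask (by omega) hb,
    ncard_commonMasks_unitMask_symmDiff_unitMask hab hb hn,
    ncard_commonMasks_inter_commonMasks hab hb] at hcount
  rw [pathNeighborMasks, Set.ncard_sdiff' hsub, hpath]
  split_ifs at hcount ⊢ <;> omega

theorem pathNeighborhood_eq_preimage (X : Fin n → Bool) (a b : ℕ) :
    {W | W ∉ ({X, X ∆ unitMask a, X ∆ unitMask b} : Set (Fin n → Bool)) ∧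
      ((augCube n).Adj X W ∨ (augCube n).Adj (X ∆ unitMask a) W ∨
        (augCube n).Adj (X ∆ unitMask b) W)} =
      (X ∆ ·) ⁻¹' pathNeighborMasks n a b := by
  ext W
  simp only [augCube_adj_symmDiff_iff]
  simp only [pathNeighborMasks, Set.mem_ofPred_eq, Set.mem_preimage, Set.mem_sdiff,
    Set.mem_union, Set.mem_insert_iff, Set.mem_singleton_iff, augCube_adj_iff, eq_symmDiff_iff,
    symmDiff_eq_bot, eq_comm (a := W)]
  tauto

end AugmentedCube

/-- Let `n ≥ 5`, `X` a vertex of `AQ_n` and `1 ≤ i < j ≤ n` (paper bit `i` is index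
`i - 1`), so that `P = (X_i, X, X_j)` is a path of length two.  Then `|N(P)| = 6n - 13`
if `(i = 1 ∧ j ∈ {2, 3}) ∨ (i > 1 ∧ j = i + 1)`, and `|N(P)| = 6n - 12` otherwise. -/
theorem augCube_hypercube_path_neighborhood (n : ℕ) (hn : 5 ≤ n) (X : Fin n → Bool)
    (i j : ℕ) (h1 : 1 ≤ i) (hij : i < j) (hjn : j ≤ n) :
    (((i = 1 ∧ (j = 2 ∨ j = 3)) ∨ (1 < i ∧ j = i + 1)) →
      {W | W ∉ ({X, (flipBit ⟨i - 1, by omega⟩ X), (flipBit ⟨j - 1, by omega⟩ X)} : Set (Fin n → Bool)) ∧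
      ((augCube n).Adj X W ∨ (augCube n).Adj (flipBit ⟨i - 1, by omega⟩ X) W ∨ (augCube n).Adj (flipBit ⟨j - 1, by omega⟩ X) W)}.ncard = 6 * n - 13) ∧
    (¬ ((i = 1 ∧ (j = 2 ∨ j = 3)) ∨ (1 < i ∧ j = i + 1)) →
      {W | W ∉ ({X, (flipBit ⟨i - 1, by omega⟩ X), (flipBit ⟨j - 1, by omega⟩ X)} : Set (Fin n → Bool)) ∧
      ((augCube n).Adj X W ∨ (augCube n).Adj (flipBit ⟨i - 1, by omega⟩ X) W ∨ (augCube n).Adj (flipBit ⟨j - 1, by omega⟩ X) W)}.ncard = 6 * n - 12) := by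
  have hexc : AugmentedCube.IsExceptionalPair (i - 1) (j - 1) ↔
      (i = 1 ∧ (j = 2 ∨ j = 3)) ∨ (1 < i ∧ j = i + 1) := by
    unfold AugmentedCube.IsExceptionalPair
    omega
  simp only [AugmentedCube.flipBit_eq_symmDiff]
  rw [AugmentedCube.pathNeighborhood_eq_preimage, Set.ncard_preimage_symmDiff,
    AugmentedCube.ncard_pathNeighborMasks (by omega) (by omega) (by omega)]
  exact ⟨fun h => if_pos (hexc.2 h), fun h => if_neg (mt hexc.1 h)⟩
end
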